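/- Fix a distribution P over a countable measurable space X and a set A of probability distributions on X with P(P̂_n ∈ A) > 0. Then (1/n) · ln P(P̂_n ∈ A) ≤ − D(ω_A ‖ P). -/

import Mathlib

open scoped ENNReal

/-- Relative entropy (KL divergence) `D(Q ‖ R) = E_{y ∼ Q}[ln (Q y / R y)]`
for PMFs on a countable type. -/
noncomputable def klDiv {Y : Type*} (Q R : PMF Y) : ℝ :=
  ∑' y, (Q y).toReal * Real.log ((Q y).toReal / (R y).toReal)

/-- Cross entropy `H(Q, P) = E_{y ∼ Q}[ln (1 / P y)]`. -/
noncomputable def crossEnt {Y : Type*} (Q P : PMF Y) : ℝ :=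
  ∑' y, (Q y).toReal * Real.log (1 / (P y).toReal)

/-- Entropy `H(Q) = E_{y ∼ Q}[ln (1 / Q y)]`. -/
noncomputable def ent {Y : Type*} (Q : PMF Y) : ℝ :=
  ∑' y, (Q y).toReal * Real.log (1 / (Q y).toReal)

/-- The `n`-fold product distribution `P^n` on `X^n`, assigning to each
`y ∈ X^n` the probability `∏ i, P (y i)`. -/
noncomputable def piPMF {X : Type*} (n : ℕ) (P : PMF X) : PMF (Fin n → X) :=
  ⟨fun y => ∏ i, P (y i), by
    rw [Summable.hasSum_iff ENNReal.summable]
    induction n with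
    | zero =>
      rw [tsum_eq_single (default : Fin 0 → X)
        (fun b hb => absurd (Subsingleton.elim b default) hb)]
      simp
    | succ n ih =>
      rw [← (Fin.consEquiv (fun _ : Fin (n+1) => X)).tsum_eq, ENNReal.tsum_prod']
      simp only [Fin.consEquiv_apply, Fin.prod_univ_succ, Fin.cons_zero, Fin.cons_succ]
      simp_rw [ENNReal.tsum_mul_left, ih, mul_one]
      exact P.tsum_coe⟩

/-- The empirical measure `μ̂_Z` of a sample `Z ∈ X^n`: it assigns probability
`(1/n) · #{i : Z i = u}` to each point `u`, i.e. it is the pushforward of the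
uniform distribution on `Fin n` along `Z`. -/
noncomputable def empiricalPMF {X : Type*} (n : ℕ) [NeZero n] (Z : Fin n → X) : PMF X :=
  (PMF.uniformOfFintype (Fin n)).map Z

/-- `P(P̂_n ∈ A)`: the probability, under an i.i.d. sample `Z ∼ P^n`, that the
empirical measure `μ̂_Z` lies in the set `A` of distributions. -/
noncomputable def probIn {X : Type*} (n : ℕ) [NeZero n] (P : PMF X) (A : Set (PMF X)) : ℝ≥0∞ :=
  (piPMF n P).toOuterMeasure {Z | empiricalPMF n Z ∈ A}

/-- The convex combination `lam • Q₁ + (1 - lam) • Q₂` of two PMFs. -/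
noncomputable def mixPMF {Y : Type*} (lam : ℝ≥0∞) (hlam : lam ≤ 1) (Q₁ Q₂ : PMF Y) : PMF Y :=
  ⟨fun y => lam * Q₁ y + (1 - lam) * Q₂ y, by
    rw [Summable.hasSum_iff ENNReal.summable,
      ENNReal.tsum_add, ENNReal.tsum_mul_left,
      ENNReal.tsum_mul_left, Q₁.tsum_coe, Q₂.tsum_coe, mul_one, mul_one,
      add_tsub_cancel_of_le hlam]⟩

/-- A set of PMFs is convex if it is closed under convex combinations. -/
def IsConvexPMFSet {Y : Type*} (A : Set (PMF Y)) : Prop :=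
  ∀ Q₁ ∈ A, ∀ Q₂ ∈ A, ∀ (lam : ℝ≥0∞) (hlam : lam ≤ 1), mixPMF lam hlam Q₁ Q₂ ∈ A

/-! Let `μ` be the law of `Z ∼ Pⁿ` conditioned on `μ̂_Z ∈ A`, so that `μ = 1_E · Pⁿ / p` with
`p = P(P̂_n ∈ A)` and hence `D(μ ‖ Pⁿ) = -ln p`. All one-dimensional marginals of `μ` equal `ω`, so
`D(μ ‖ Pⁿ) - n · D(ω ‖ P) = D(μ ‖ ωⁿ) ≥ 0` by Gibbs' inequality. The bound `ω ≤ P / p` makes every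
series involved absolutely convergent. -/

open Real

noncomputable def klDivTerm (a b : ℝ≥0∞) : ℝ := a.toReal * log (a.toReal / b.toReal)

theorem klDiv_eq_tsum_klDivTerm {Y : Type*} (Q R : PMF Y) :
    klDiv Q R = ∑' y, klDivTerm (Q y) (R y) := rfl

theorem Real.sub_le_mul_log_div {a b : ℝ} (ha : 0 ≤ a) (hb : 0 < b) : a - b ≤ a * log (a / b) := by
  rcases ha.eq_or_lt with rfl | ha
  · simp [hb.le]
  have h : -log (a / b) ≤ b / a - 1 := by
    rw [← log_inv, inv_div]
    exact log_le_sub_one_of_pos (div_pos hb ha)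
  have := mul_le_mul_of_nonneg_left h ha.le
  rw [mul_sub, mul_div_cancel₀ _ ha.ne'] at this
  linarith

theorem sub_le_klDivTerm {a b : ℝ≥0∞} (hb : b ≠ ⊤) (hab : a ≠ 0 → b ≠ 0) :
    a.toReal - b.toReal ≤ klDivTerm a b := by
  by_cases ha : a = 0
  · simp [klDivTerm, ha]
  · exact sub_le_mul_log_div ENNReal.toReal_nonneg (ENNReal.toReal_pos (hab ha) hb)

theorem PMF.hasSum_toReal {Y : Type*} (μ : PMF Y) : HasSum (fun y => (μ y).toReal) 1 := by
  convert ENNReal.hasSum_toReal (f := μ) (by simp)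
  rw [← ENNReal.tsum_toReal_eq μ.apply_ne_top, μ.tsum_coe, ENNReal.toReal_one]

section KL

variable {Y : Type*} {μ ν : PMF Y}

theorem klDiv_nonneg (hμν : ∀ y, μ y ≠ 0 → ν y ≠ 0) : 0 ≤ klDiv μ ν := by
  rw [klDiv_eq_tsum_klDivTerm]
  by_cases hs : Summable fun y => klDivTerm (μ y) (ν y)
  · simpa using hasSum_le (fun y => sub_le_klDivTerm (ν.apply_ne_top y) (hμν y))
      (μ.hasSum_toReal.sub ν.hasSum_toReal) hs.hasSum
  · rw [tsum_eq_zero_of_not_summable hs]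

theorem summable_klDivTerm_of_le_mul {c : ℝ}
    (hμν : ∀ y, (μ y).toReal ≤ c * (ν y).toReal) : Summable fun y => klDivTerm (μ y) (ν y) := by
  have hsupp : ∀ y, μ y ≠ 0 → ν y ≠ 0 := fun y hy hν =>
    (ENNReal.toReal_pos hy (μ.apply_ne_top y)).not_ge (by simpa [hν] using hμν y)
  have hupper : ∀ y, klDivTerm (μ y) (ν y) ≤ (μ y).toReal * log c := fun y => by
    by_cases hy : μ y = 0
    · simp [klDivTerm, hy]
    have hν := ENNReal.toReal_pos (hsupp y hy) (ν.apply_ne_top y)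
    have hμ := ENNReal.toReal_pos hy (μ.apply_ne_top y)
    exact mul_le_mul_of_nonneg_left (log_le_log (div_pos hμ hν) ((div_le_iff₀ hν).2 (hμν y))) hμ.le
  have hlower y := sub_le_klDivTerm (ν.apply_ne_top y) (hsupp y)
  have hμ := μ.hasSum_toReal.summable
  have hdiff := hμ.sub ν.hasSum_toReal.summable
  simpa using (Summable.of_nonneg_of_le (fun y => sub_nonneg.2 (hlower y))
    (fun y => sub_le_sub_right (hupper y) _) ((hμ.mul_right _).sub hdiff)).add hdiff

end KL

section Map

variable {Y X : Type*} {μ : PMF Y} {g : Y → X}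

theorem PMF.hasSum_toReal_fiber (x : X) :
    HasSum (fun y : {y // g y = x} => (μ y).toReal) (μ.map g x).toReal := by
  have h : ∑' y : {y // g y = x}, μ y = μ.map g x := by
    change ∑' y : {y | g y = x}, μ y = _
    rw [PMF.map_apply, tsum_subtype]
    congr 1 with y
    by_cases hy : g y = x
    · simp [hy]
    · simp [hy, Ne.symm hy]
  rw [← h, ENNReal.tsum_toReal_eq fun _ => μ.apply_ne_top _]
  exact ENNReal.hasSum_toReal (by rw [h]; exact PMF.apply_ne_top _ _)

theorem PMF.hasSum_toReal_mul_comp {ν : PMF X} (hν : μ.map g = ν) {f : X → ℝ}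
    (hf : Summable fun x => (ν x).toReal * f x) :
    HasSum (fun y => (μ y).toReal * f (g y)) (∑' x, (ν x).toReal * f x) := by
  subst hν
  have hfiber : ∀ (φ : X → ℝ) x, HasSum (fun y : {y // g y = x} => (μ y).toReal * φ (g y))
      ((μ.map g x).toReal * φ x) := fun φ x => by
    have h : (fun y : {y // g y = x} => (μ y).toReal * φ (g y))
        = fun y : {y // g y = x} => (μ y).toReal * φ x :=
      funext fun y => by rw [y.2]
    exact h ▸ (PMF.hasSum_toReal_fiber x).mul_right (φ x)
  have hs : Summable fun p : (Σ x, {y // g y = x}) => (μ p.2).toReal * f (g p.2) := by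
    refine summable_abs_iff.1 ((summable_sigma_of_nonneg fun _ => abs_nonneg _).2
      ⟨fun x => ?_, hf.abs.congr fun x => ?_⟩) <;> simp only [abs_mul, ENNReal.abs_toReal]
    · exact (hfiber (|f ·|) x).summable
    · exact ((hfiber (|f ·|) x).tsum_eq).symm
  rw [(hs.hasSum.sigma (hfiber f)).tsum_eq]
  exact (Equiv.sigmaFiberEquiv g).hasSum_iff.1 hs.hasSum

theorem PMF.map_apply_le_mul {ν : PMF Y} {c : ℝ≥0∞} (h : ∀ y, μ y ≤ c * ν y) (x : X) :
    μ.map g x ≤ c * ν.map g x := by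
  simp only [PMF.map_apply, ← ENNReal.tsum_mul_left]
  exact ENNReal.tsum_le_tsum fun y => by split_ifs <;> simp [h y]

end Map

theorem ENNReal.tsum_pi_fin_prod {X : Type*} {n : ℕ} (f : Fin n → X → ℝ≥0∞) :
    ∑' Z : Fin n → X, ∏ i, f i (Z i) = ∏ i, ∑' x, f i x := by
  induction n with
  | zero => simp
  | succ n ih =>
    rw [← (Fin.consEquiv fun _ => X).tsum_eq, ENNReal.tsum_prod']
    simp only [Fin.consEquiv_apply, Fin.prod_univ_succ, Fin.cons_zero, Fin.cons_succ,
      ENNReal.tsum_mul_left, ih, ENNReal.tsum_mul_right]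

theorem piPMF_apply {X : Type*} (n : ℕ) (P : PMF X) (Z : Fin n → X) :
    piPMF n P Z = ∏ i, P (Z i) := rfl

theorem piPMF_map_eval {X : Type*} (n : ℕ) (P : PMF X) (i : Fin n) :
    (piPMF n P).map (fun Z => Z i) = P := by
  classical
  ext u
  let f : Fin n → X → ℝ≥0∞ := fun j x => if j = i then ({u} : Set X).indicator P x else P x
  have h : ∀ Z : Fin n → X, (if u = Z i then piPMF n P Z else 0) = ∏ j, f j (Z j) := fun Z => by
    by_cases hu : u = Z i
    · rw [if_pos hu, piPMF_apply]
      refine Finset.prod_congr rfl fun j _ => ?_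
      by_cases hj : j = i
      · subst hj
        simp [f, hu]
      · simp [f, hj]
    · rw [if_neg hu, Finset.prod_eq_zero (Finset.mem_univ i)]
      simp [f, Ne.symm hu]
  rw [PMF.map_apply, tsum_congr h, ENNReal.tsum_pi_fin_prod,
    Finset.prod_eq_single i (fun j _ hj => by simp [f, hj]) (by simp)]
  simp [f]

theorem natCast_mul_klDiv_le_klDiv_piPMF {X : Type*} {n : ℕ} {μ : PMF (Fin n → X)} {ω P : PMF X}
    (hω : ∀ i : Fin n, ω = μ.map fun Z => Z i) (hμP : ∀ Z, μ Z ≠ 0 → piPMF n P Z ≠ 0)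
    (hμ : Summable fun Z => klDivTerm (μ Z) (piPMF n P Z))
    (hωP : Summable fun u => klDivTerm (ω u) (P u)) :
    n * klDiv ω P ≤ klDiv μ (piPMF n P) := by
  set h : X → ℝ := fun u => log ((ω u).toReal / (P u).toReal)
  have hsupp : ∀ Z, μ Z ≠ 0 → ∀ i, ω (Z i) ≠ 0 ∧ P (Z i) ≠ 0 := fun Z hZ i =>
    ⟨by rw [hω i]; exact (PMF.mem_support_map_iff _ _ _).2 ⟨Z, hZ, rfl⟩,
      Finset.prod_ne_zero_iff.1 (piPMF_apply n P Z ▸ hμP Z hZ) i (Finset.mem_univ i)⟩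
  have hterm : ∀ Z, klDivTerm (μ Z) (piPMF n ω Z)
      = klDivTerm (μ Z) (piPMF n P Z) - ∑ i, (μ Z).toReal * h (Z i) := fun Z => by
    by_cases hZ : μ Z = 0
    · simp [klDivTerm, hZ]
    have hω' i : (ω (Z i)).toReal ≠ 0 :=
      ENNReal.toReal_ne_zero.2 ⟨(hsupp Z hZ i).1, ω.apply_ne_top _⟩
    have hP' i : (P (Z i)).toReal ≠ 0 :=
      ENNReal.toReal_ne_zero.2 ⟨(hsupp Z hZ i).2, P.apply_ne_top _⟩
    have hm : (μ Z).toReal ≠ 0 := ENNReal.toReal_ne_zero.2 ⟨hZ, μ.apply_ne_top _⟩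
    simp only [klDivTerm, h, piPMF_apply, ENNReal.toReal_prod]
    rw [log_div hm (Finset.prod_ne_zero_iff.2 fun i _ => hω' i),
      log_div hm (Finset.prod_ne_zero_iff.2 fun i _ => hP' i),
      log_prod fun i _ => hω' i, log_prod fun i _ => hP' i]
    simp only [log_div (hω' _) (hP' _), ← Finset.mul_sum, Finset.sum_sub_distrib]
    ring
  have hmarg i : HasSum (fun Z => (μ Z).toReal * h (Z i)) (klDiv ω P) :=
    PMF.hasSum_toReal_mul_comp (hω i).symm hωP
  have hsum := hμ.hasSum.sub (hasSum_sum fun i (_ : i ∈ Finset.univ) => hmarg i)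
  simp only [← hterm, Finset.sum_const, Finset.card_univ, Fintype.card_fin, nsmul_eq_mul] at hsum
  have hnonneg := klDiv_nonneg (μ := μ) (ν := piPMF n ω) fun Z hZ => by
    rw [piPMF_apply]
    exact Finset.prod_ne_zero_iff.2 fun i _ => (hsupp Z hZ i).1
  rw [klDiv_eq_tsum_klDivTerm, hsum.tsum_eq] at hnonneg
  rw [klDiv_eq_tsum_klDivTerm μ]
  linarith

section Conditioning

variable {Y : Type*} {ν μ : PMF Y} {E : Set Y}

theorem apply_eq_inv_mul_indicator_of_cond
    (hμ : ∀ y, μ y = ν.toOuterMeasure ({y} ∩ E) / ν.toOuterMeasure E) (y : Y) :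
    μ y = (ν.toOuterMeasure E)⁻¹ * E.indicator ν y := by
  rw [hμ, ENNReal.div_eq_inv_mul]
  by_cases hy : y ∈ E
  · rw [Set.singleton_inter_of_mem hy, PMF.toOuterMeasure_apply_singleton, Set.indicator_of_mem hy]
  · rw [Set.singleton_inter_of_notMem hy, MeasureTheory.measure_empty, Set.indicator_of_notMem hy]

theorem mem_and_ne_zero_of_cond
    (hμ : ∀ y, μ y = ν.toOuterMeasure ({y} ∩ E) / ν.toOuterMeasure E) {y : Y} (hy : μ y ≠ 0) :
    y ∈ E ∧ ν y ≠ 0 := by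
  rw [apply_eq_inv_mul_indicator_of_cond hμ] at hy
  by_cases hyE : y ∈ E <;> simp_all

theorem hasSum_klDivTerm_of_cond
    (hμ : ∀ y, μ y = ν.toOuterMeasure ({y} ∩ E) / ν.toOuterMeasure E) :
    HasSum (fun y => klDivTerm (μ y) (ν y)) (-log (ν.toOuterMeasure E).toReal) := by
  have hterm y : klDivTerm (μ y) (ν y) = (μ y).toReal * -log (ν.toOuterMeasure E).toReal := by
    by_cases hy : μ y = 0
    · simp [klDivTerm, hy]
    obtain ⟨hyE, hν⟩ := mem_and_ne_zero_of_cond hμ hy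
    have hμν : (μ y).toReal = (ν.toOuterMeasure E).toReal⁻¹ * (ν y).toReal := by
      rw [apply_eq_inv_mul_indicator_of_cond hμ, Set.indicator_of_mem hyE, ENNReal.toReal_mul,
        ENNReal.toReal_inv]
    rw [klDivTerm, hμν, mul_div_cancel_right₀ _ (ENNReal.toReal_ne_zero.2 ⟨hν, ν.apply_ne_top y⟩),
      log_inv, ← hμν]
  simpa [hterm] using μ.hasSum_toReal.mul_right (-log (ν.toOuterMeasure E).toReal)

end Conditioning

theorem sanov_upper_bound_marginal_general {X : Type*}
    (n : ℕ) [NeZero n] (P : PMF X) (A : Set (PMF X))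
    (hA : 0 < probIn n P A)
    (μA : PMF (Fin n → X))
    (hμA : ∀ y : Fin n → X,
      μA y = (piPMF n P).toOuterMeasure ({y} ∩ {Z | empiricalPMF n Z ∈ A}) / probIn n P A)
    (ωA : PMF X)
    (hωA : ∀ i : Fin n, ωA = μA.map (fun Z => Z i)) :
    (1 / (n : ℝ)) * Real.log (probIn n P A).toReal ≤ - klDiv ωA P := by
  have hμ : HasSum (fun Z => klDivTerm (μA Z) (piPMF n P Z)) (-log (probIn n P A).toReal) :=
    hasSum_klDivTerm_of_cond hμA
  have hμP : ∀ Z, μA Z ≤ (probIn n P A)⁻¹ * piPMF n P Z := fun Z => by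
    rw [apply_eq_inv_mul_indicator_of_cond hμA]
    exact mul_le_mul_right (Set.indicator_le_self' (fun _ _ => zero_le) Z) _
  have hωP : ∀ u, ωA u ≤ (probIn n P A)⁻¹ * P u := fun u => by
    simpa only [← hωA 0, piPMF_map_eval] using PMF.map_apply_le_mul (g := fun Z => Z 0) hμP u
  have hωP_toReal : ∀ u, (ωA u).toReal ≤ (probIn n P A).toReal⁻¹ * (P u).toReal := fun u => by
    rw [← ENNReal.toReal_inv, ← ENNReal.toReal_mul]
    exact ENNReal.toReal_mono (ENNReal.mul_ne_top (ENNReal.inv_ne_top.2 hA.ne') (P.apply_ne_top u))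
      (hωP u)
  have key := natCast_mul_klDiv_le_klDiv_piPMF hωA (fun Z hZ => (mem_and_ne_zero_of_cond hμA hZ).2)
    hμ.summable (summable_klDivTerm_of_le_mul hωP_toReal)
  rw [klDiv_eq_tsum_klDivTerm μA, hμ.tsum_eq] at key
  rw [one_div, inv_mul_le_iff₀ (Nat.cast_pos.2 (NeZero.pos n))]
  linarith

/-- Theorem 3, part (1a): `(1/n) ln P(P̂_n ∈ A) ≤ - D(ω_A ‖ P)`. -/
theorem sanov_upper_bound_marginal {X : Type*} [Countable X] [MeasurableSpace X] [MeasurableSingletonClass X]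
    (n : ℕ) [NeZero n] (P : PMF X) (A : Set (PMF X))
    (hA : 0 < probIn n P A)
    (μA : PMF (Fin n → X))
    (hμA : ∀ y : Fin n → X,
      μA y = (piPMF n P).toOuterMeasure ({y} ∩ {Z | empiricalPMF n Z ∈ A}) / probIn n P A)
    (ωA : PMF X)
    (hωA : ∀ i : Fin n, ωA = μA.map (fun Z => Z i)) :
    (1 / (n : ℝ)) * Real.log (probIn n P A).toReal ≤ - klDiv ωA P :=
  sanov_upper_bound_marginal_general n P A hA μA hμA ωA hωA
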